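/- The polynomial g = x1^2 + x2^3 + x3^3 + x4^3 + a·x2 x3 x4 over C has an isolated singularity at the origin (the vanishing locus of g and all its partial derivatives, near 0, is just {0}) if and only if a^3 + 27 ≠ 0. -/

import Mathlib

open MvPolynomial Filter Topology

/-- The equation of the `T_{333}` singularity with parameter `a`:
`x1^2 + x2^3 + x3^3 + x4^3 + a*x2*x3*x4`. -/
noncomputable def gT (a : ℂ) : MvPolynomial (Fin 4) ℂ :=
  X 0 ^ 2 + X 1 ^ 3 + X 2 ^ 3 + X 3 ^ 3 + C a * (X 1 * X 2 * X 3)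

/-!
Since `∂g/∂x1 = 2 x1`, the singular points are those with `x1 = 0` whose remaining
coordinates `(u, v, w)` solve `3u² + a vw = 0`, `3v² + a uw = 0`, `3w² + a uv = 0`.
Eliminating gives `(a³ + 27) (uvw)² = 0`, and once one coordinate vanishes so do the
others; hence `0` is the only singular point when `a³ + 27 ≠ 0`. When `a³ = -27`, the
number `v = -3/a` is a cube root of unity with `3v² + a = 0`, and the whole line through
`(0, 1, 1, v)` consists of singular points, so `0` is not isolated.
-/

lemma eval_gT (a : ℂ) (x : Fin 4 → ℂ) :
    eval x (gT a) = x 0 ^ 2 + x 1 ^ 3 + x 2 ^ 3 + x 3 ^ 3 + a * (x 1 * x 2 * x 3) := by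
  simp [gT]

lemma eval_pderiv_gT (a : ℂ) (x : Fin 4 → ℂ) (i : Fin 4) :
    eval x (pderiv i (gT a)) =
      ![2 * x 0, 3 * x 1 ^ 2 + a * (x 2 * x 3), 3 * x 2 ^ 2 + a * (x 1 * x 3),
        3 * x 3 ^ 2 + a * (x 1 * x 2)] i := by
  fin_cases i <;> simp [gT] <;> left <;> ring

lemma eq_zero_of_three_mul_sq_add_eq_zero {K : Type*} [CommRing K] [IsDomain K]
    (h3 : (3 : K) ≠ 0) {v p : K} (h : 3 * v ^ 2 + p = 0) (hp : p = 0) : v = 0 := by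
  simpa [hp, h3] using h

lemma eq_zero_of_cubic_system {K : Type*} [CommRing K] [IsDomain K] (h3 : (3 : K) ≠ 0)
    {a u v w : K} (ha : a ^ 3 + 27 ≠ 0) (hu : 3 * u ^ 2 + a * (v * w) = 0)
    (hv : 3 * v ^ 2 + a * (u * w) = 0) (hw : 3 * w ^ 2 + a * (u * v) = 0) :
    u = 0 ∧ v = 0 ∧ w = 0 := by
  have key : (a ^ 3 + 27) * (u * v * w) ^ 2 = 0 := by
    linear_combination (a ^ 2 * u ^ 2 * v * w) * hu + (-3 * a * u ^ 3 * v) * hv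
      + (9 * u ^ 2 * v ^ 2) * hw
  have huvw : u * v * w = 0 := pow_eq_zero_iff two_ne_zero |>.mp
    ((mul_eq_zero.mp key).resolve_left ha)
  rcases mul_eq_zero.mp huvw with huv | hw0
  · rcases mul_eq_zero.mp huv with hu0 | hv0
    · exact ⟨hu0, eq_zero_of_three_mul_sq_add_eq_zero h3 hv (by simp [hu0]),
        eq_zero_of_three_mul_sq_add_eq_zero h3 hw (by simp [hu0])⟩
    · exact ⟨eq_zero_of_three_mul_sq_add_eq_zero h3 hu (by simp [hv0]), hv0,
        eq_zero_of_three_mul_sq_add_eq_zero h3 hw (by simp [hv0])⟩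
  · exact ⟨eq_zero_of_three_mul_sq_add_eq_zero h3 hu (by simp [hw0]),
      eq_zero_of_three_mul_sq_add_eq_zero h3 hv (by simp [hw0]), hw0⟩

lemma eq_zero_of_pderiv_gT_eq_zero {a : ℂ} (ha : a ^ 3 + 27 ≠ 0) {x : Fin 4 → ℂ}
    (hx : ∀ i, eval x (pderiv i (gT a)) = 0) : x = 0 := by
  have h : ∀ i, ![2 * x 0, 3 * x 1 ^ 2 + a * (x 2 * x 3), 3 * x 2 ^ 2 + a * (x 1 * x 3),
      3 * x 3 ^ 2 + a * (x 1 * x 2)] i = 0 := fun i => eval_pderiv_gT a x i ▸ hx i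
  obtain ⟨h1, h2, h3⟩ := eq_zero_of_cubic_system three_ne_zero ha (h 1) (h 2) (h 3)
  have h0 : x 0 = 0 := by simpa using h 0
  ext i
  fin_cases i <;> assumption

lemma gT_and_pderiv_vanish_on_line {a : ℂ} (ha : a ^ 3 + 27 = 0) (t : ℂ) :
    eval (t • ![0, 1, 1, -3 / a]) (gT a) = 0 ∧
      ∀ i, eval (t • ![0, 1, 1, -3 / a]) (pderiv i (gT a)) = 0 := by
  have ha0 : a ≠ 0 := by rintro rfl; norm_num at ha
  set v := -3 / a
  have hav : a * v = -3 := by simp only [v]; field_simp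
  have hv : 3 * v ^ 2 + a = 0 := by
    simp only [v]
    field_simp
    linear_combination ha
  clear_value v
  refine ⟨?_, fun i => ?_⟩
  · simp only [eval_gT, Pi.smul_apply, smul_eq_mul, Matrix.cons_val]
    linear_combination (t ^ 3 * v / 3) * hv + (2 / 3 * t ^ 3) * hav
  · rw [eval_pderiv_gT]
    fin_cases i <;>
      simp only [Fin.zero_eta, Fin.mk_one, Fin.reduceFinMk, Pi.smul_apply, smul_eq_mul,
        Matrix.cons_val]
    · simp
    · linear_combination t ^ 2 * hav
    · linear_combination t ^ 2 * hav
    · linear_combination t ^ 2 * hv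

lemma exists_ne_zero_norm_smul_lt {𝕜 E : Type*} [NontriviallyNormedField 𝕜]
    [NormedAddCommGroup E] [NormedSpace 𝕜 E] (p : E) {ε : ℝ} (hε : 0 < ε) :
    ∃ t : 𝕜, t ≠ 0 ∧ ‖t • p‖ < ε := by
  have hcont : Continuous fun t : 𝕜 => t • p := by fun_prop
  have hlim : Tendsto (fun t : 𝕜 => t • p) (𝓝[≠] 0) (𝓝 0) :=
    (hcont.tendsto' 0 0 (zero_smul 𝕜 p)).mono_left nhdsWithin_le_nhds
  obtain ⟨t, htε, ht⟩ :=
    ((hlim.eventually (Metric.ball_mem_nhds 0 hε)).and self_mem_nhdsWithin).exists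
  exact ⟨t, ht, by simpa using htε⟩

/-- The polynomial `gT a` has an isolated singularity at the origin (near the origin, the
common vanishing locus of `g` and all of its partial derivatives is just `{0}`) if and only
if `a^3 + 27 ≠ 0`. -/
theorem T333_isolated_iff (a : ℂ) :
    (∃ ε > (0 : ℝ), ∀ x : Fin 4 → ℂ, ‖x‖ < ε →
      eval x (gT a) = 0 → (∀ i : Fin 4, eval x (pderiv i (gT a)) = 0) → x = 0) ↔
    a ^ 3 + 27 ≠ 0 := by
  refine ⟨fun ⟨ε, hε, hiso⟩ ha => ?_, fun ha => ⟨1, one_pos, fun x _ _ hx =>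
    eq_zero_of_pderiv_gT_eq_zero ha hx⟩⟩
  obtain ⟨t, ht, htε⟩ := exists_ne_zero_norm_smul_lt (𝕜 := ℂ) ![0, 1, 1, -3 / a] hε
  have hsing := gT_and_pderiv_vanish_on_line ha t
  have hp : (![0, 1, 1, -3 / a] : Fin 4 → ℂ) ≠ 0 := fun h => by simpa using congrFun h 1
  exact smul_ne_zero ht hp (hiso _ htε hsing.1 hsing.2)
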